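/- For every word u over a nonempty finite alphabet A and every letter a ∈ A, r(u,a) ≤ ρ(u). -/

import Mathlib

/-- Simon's congruence of order `k`: `u` and `v` have the same subwords
(subsequences) of length at most `k`. -/
def SimonCong {A : Type*} (k : ℕ) (u v : List A) : Prop :=
  ∀ s : List A, s.length ≤ k → (s.Sublist u ↔ s.Sublist v)

/-- The subword distance `δ(u,v) = sup {k | u ∼ₖ v} ∈ ℕ ∪ {∞}`. -/
noncomputable def delta {A : Type*} (u v : List A) : ℕ∞ :=
  ⨆ k ∈ {k : ℕ | SimonCong k u v}, (k : ℕ∞)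

/-- Right side distance `r(u,t) = δ(u, u·t)`. -/
noncomputable def sideR {A : Type*} (u t : List A) : ℕ∞ :=
  delta u (u ++ t)

/-- Left side distance `ℓ(t,u) = δ(t·u, u)`. -/
noncomputable def sideL {A : Type*} (t u : List A) : ℕ∞ :=
  delta (t ++ u) u

/-- The piecewise complexity `h(u)`: the least `n` such that every word
`v` with `u ∼ₙ v` equals `u`. -/
noncomputable def pieceH {A : Type*} (u : List A) : ℕ :=
  sInf {n : ℕ | ∀ v : List A, SimonCong n u v → v = u}

/-- A word `u` is `m`-reduced if no strict subword of `u` is `∼ₘ`-equivalent to `u`. -/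
def MReduced {A : Type*} (m : ℕ) (u : List A) : Prop :=
  ∀ u' : List A, u'.Sublist u → u' ≠ u → ¬ SimonCong m u' u

/-- The piecewise minimality index `ρ(u)`: the least `m` such that `u` is `m`-reduced. -/
noncomputable def rho {A : Type*} (u : List A) : ℕ :=
  sInf {m : ℕ | MReduced m u}


/-!
If `u ∼ₖ u·a` with `k ≥ 1`, then `a` occurs in `u`; write `u = x·a·y` with `a ∉ y`.
For every subword `s` of `u` of length `< k`, the word `s·a` is a subword of `u·a`, hence of
`u`, and since `y` contains no `a` its last letter must be matched inside `x·a`, so `s ⊑ x`.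
Thus the strict subword `x·y` of `u` is `∼ₖ₋₁`-equivalent to `u`, and `u` is not
`(k-1)`-reduced.
-/

namespace List

variable {α : Type*} {a : α}

theorem exists_eq_append_cons_notMem_right : ∀ {l : List α}, a ∈ l →
    ∃ x y, l = x ++ a :: y ∧ a ∉ y
  | b :: t, h => by
    by_cases ht : a ∈ t
    · obtain ⟨x, y, rfl, hy⟩ := exists_eq_append_cons_notMem_right ht
      exact ⟨b :: x, y, rfl, hy⟩
    · obtain rfl : a = b := (mem_cons.mp h).resolve_right ht
      exact ⟨[], t, rfl, ht⟩

theorem sublist_of_concat_sublist_append_cons {s x y : List α} (hy : a ∉ y)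
    (h : s ++ [a] <+ x ++ a :: y) : s <+ x := by
  rw [append_cons x a y] at h
  obtain ⟨l₁, l₂, hs, h₁, h₂⟩ := sublist_append_iff.mp h
  rcases eq_nil_or_concat' l₂ with rfl | ⟨l₂, b, rfl⟩
  · rw [append_nil] at hs
    exact (append_sublist_append_right [a]).mp (hs ▸ h₁)
  · rw [← append_assoc] at hs
    obtain ⟨-, rfl⟩ := append_singleton_inj.mp hs
    exact absurd (h₂.subset (by simp)) hy

end List

section SimonCong

variable {A : Type*}

theorem mReduced_length (u : List A) : MReduced u.length u :=
  fun _ hsub hne hcong => hne (hsub.antisymm ((hcong u le_rfl).mpr (List.Sublist.refl u)))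

theorem le_of_simonCong_append_singleton {u : List A} {a : A} {k m : ℕ}
    (hcong : SimonCong k u (u ++ [a])) (hm : MReduced m u) : k ≤ m := by
  by_contra! hmk
  have ha : a ∈ u :=
    List.singleton_sublist.mp ((hcong [a] (by rw [List.length_singleton]; omega)).mpr (by simp))
  obtain ⟨x, y, rfl, hy⟩ := List.exists_eq_append_cons_notMem_right ha
  have hsub : (x ++ y).Sublist (x ++ a :: y) := (List.sublist_cons_self a y).append_left x
  refine hm (x ++ y) hsub (by simp) fun s hs => ⟨fun h => h.trans hsub, fun h => ?_⟩
  have hsa : (s ++ [a]).Sublist (x ++ a :: y) :=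
    (hcong (s ++ [a]) (by rw [List.length_append, List.length_singleton]; omega)).mpr
      (h.append (List.Sublist.refl [a]))
  exact (List.sublist_of_concat_sublist_append_cons hy hsa).trans (List.sublist_append_left x y)

end SimonCong

theorem stmt13_general {A : Type*} (u : List A) (a : A) :
    sideR u [a] ≤ (rho u : ℕ∞) := by
  refine iSup₂_le fun k hk => ?_
  have hk_le : k ≤ rho u :=
    le_csInf ⟨u.length, mReduced_length u⟩ fun _ hm => le_of_simonCong_append_singleton hk hm
  exact_mod_cast hk_le

theorem stmt13 {A : Type*} [Fintype A] [Nonempty A] (u : List A) (a : A) :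
    sideR u [a] ≤ (rho u : ℕ∞) :=
  stmt13_general u a
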